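/- There exist positive constants c₁, c₂ such that for every even integer n ≥ 4, c₁ · n / (log log(10 n))² ≤ M_R(n) ≤ c₂ · n · (log log(10 n))², where M_R(n) = π c₀ n ∏_{p ∣ n-1} (1 - χ(p)/p) ∏_{p ∣ n, p>2} (1 + (p+χ(p))/(p(p-2))) ∏_{p ∤ n(n-1)} (1 + 2χ(p)/(p(p-2))). -/

import Mathlib

noncomputable def chi (d : ℕ) : ℝ := if d % 4 = 1 then 1 else if d % 4 = 3 then -1 else 0

/-- The twin-prime-type constant `c₀ = 2 ∏_{p > 2} (1 - 1/(p-1)²)`. -/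
noncomputable def c₀ : ℝ :=
  2 * ∏' p : {p : Nat.Primes // 2 < (p : ℕ)}, (1 - 1 / (((p : ℕ) : ℝ) - 1) ^ 2)

/-- The expected main term `M_R(n)` in the binary Goldbach problem weighted by
`r(p₁ - 1)`. -/
noncomputable def MR (n : ℕ) : ℝ :=
  Real.pi * c₀ * n *
    (∏ p ∈ (n - 1).primeFactors, (1 - chi p / p)) *
    (∏ p ∈ n.primeFactors.filter (fun p => 2 < p),
      (1 + ((p : ℝ) + chi p) / (p * ((p : ℝ) - 2)))) *
    (∏' p : {p : Nat.Primes // ¬ (p : ℕ) ∣ n * (n - 1)},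
      (1 + 2 * chi (p : ℕ) / ((p : ℕ) * (((p : ℕ) : ℝ) - 2))))

/-!
Every Euler factor of `MR n` has the form `1 + x_p`. In `c₀` and in the product over
`p ∤ n(n-1)` one has `|x_p| ≪ 1/p²`, so both products lie between two positive absolute constants.
The two finite products are governed by `S(m) = ∑_{p ∣ m} 1/p`: the one over `p ∣ n - 1` lies in
`[e^{-2S(n-1)}, e^{S(n-1)}]`, the one over `p ∣ n` in `[1, C e^{S(n)}]`. Finally
`S(m) ≤ log log log (10n) + O(1)` for `m ≤ 10n`: prime divisors `p ≤ log (10n)` contribute at most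
`log log log (10n) + O(1)` by Mertens' bound `∑_{p ≤ N} 1/p ≤ log log N + O(1)` (Chebyshev's
`θ(N) ≤ N log 4` and Abel summation), and there are too few larger ones to contribute more
than `O(1)`.
-/

open Real Finset Function

lemma abs_log_one_add_le_div {x a : ℝ} (ha : a < 1) (hx : |x| ≤ a) :
    |log (1 + x)| ≤ |x| / (1 - a) := by
  have ha' : 0 < 1 - a := by linarith
  have hx' := abs_le.1 hx
  have hpos : 0 < 1 + x := by linarith
  rw [abs_le]
  constructor
  · calc -(|x| / (1 - a)) ≤ 1 - (1 + x)⁻¹ := by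
          rw [show 1 - (1 + x)⁻¹ = x / (1 + x) by field_simp; ring, neg_div',
            div_le_div_iff₀ ha' hpos]
          rcases le_total 0 x with h | h
          · rw [abs_of_nonneg h]; nlinarith
          · rw [abs_of_nonpos h]; nlinarith
      _ ≤ log (1 + x) := one_sub_inv_le_log_of_pos hpos
  · calc log (1 + x) ≤ x := by linarith [log_le_sub_one_of_pos hpos]
      _ ≤ |x| := le_abs_self x
      _ ≤ |x| / (1 - a) := le_div_self (abs_nonneg x) ha' (by linarith [abs_nonneg x])

section Products

variable {ι : Type*} {x : ι → ℝ} {a : ℝ}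

lemma exp_neg_sum_abs_div_le_prod_one_add {s : Finset ι} (ha : a < 1)
    (hx : ∀ i ∈ s, |x i| ≤ a) :
    exp (-(∑ i ∈ s, |x i|) / (1 - a)) ≤ ∏ i ∈ s, (1 + x i) := by
  rw [neg_div, sum_div, ← sum_neg_distrib, exp_sum]
  refine prod_le_prod (fun i _ => (exp_pos _).le) fun i hi => ?_
  have hpos : 0 < 1 + x i := by linarith [neg_abs_le (x i), hx i hi]
  calc exp (-(|x i| / (1 - a))) ≤ exp (log (1 + x i)) :=
        exp_le_exp.2 (neg_le_of_abs_le (abs_log_one_add_le_div ha (hx i hi)))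
    _ = 1 + x i := exp_log hpos

lemma prod_one_add_le_exp_sum_of_neg_one_le {s : Finset ι} (hx : ∀ i ∈ s, -1 ≤ x i) :
    ∏ i ∈ s, (1 + x i) ≤ exp (∑ i ∈ s, x i) := by
  rw [exp_sum]
  exact prod_le_prod (fun i hi => by linarith [hx i hi]) fun i _ => by
    linarith [add_one_le_exp (x i)]

lemma tprod_one_add_mem_Icc (ha : a < 1) (hx : ∀ i, |x i| ≤ a)
    (hs : Summable fun i => |x i|) :
    ∏' i, (1 + x i) ∈
      Set.Icc (exp (-(∑' i, |x i|) / (1 - a))) (exp ((∑' i, |x i|) / (1 - a))) := by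
  have hpos : ∀ i, 0 < 1 + x i := fun i => by linarith [neg_abs_le (x i), hx i]
  have hbound : |∑' i, log (1 + x i)| ≤ (∑' i, |x i|) / (1 - a) := by
    rw [← tsum_div_const]
    exact tsum_of_norm_bounded (f := fun i => log (1 + x i)) (hs.div_const _).hasSum
      fun i => abs_log_one_add_le_div ha (hx i)
  rw [← rexp_tsum_eq_tprod hpos (summable_log_one_add_of_summable hs.of_abs), neg_div]
  exact ⟨exp_le_exp.2 (neg_le_of_abs_le hbound), exp_le_exp.2 (le_of_abs_le hbound)⟩

lemma tprod_one_add_mem_Icc_of_abs_le_div_sq {e : ι → ℕ} (he : Injective e) {C B : ℝ}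
    (ha : a < 1) (hxa : ∀ i, |x i| ≤ a) (hC : 0 ≤ C) (hx : ∀ i, |x i| ≤ C / (e i : ℝ) ^ 2)
    (hB : C * (π ^ 2 / 6) / (1 - a) ≤ B) :
    ∏' i, (1 + x i) ∈ Set.Icc (exp (-B)) (exp B) := by
  have hsum : Summable fun i => C / (e i : ℝ) ^ 2 := by
    simpa [div_eq_mul_inv] using (hasSum_zeta_two.summable.comp_injective he).mul_left C
  have hs : Summable fun i => |x i| := hsum.of_nonneg_of_le (fun i => abs_nonneg _) hx
  have htsum : (∑' i, |x i|) / (1 - a) ≤ B := by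
    refine le_trans ?_ hB
    gcongr
    calc ∑' i, |x i| ≤ ∑' i, C / (e i : ℝ) ^ 2 := hs.tsum_le_tsum hx hsum
      _ = C * ∑' i, 1 / (e i : ℝ) ^ 2 := by rw [← tsum_mul_left]; simp [div_eq_mul_inv]
      _ ≤ C * (π ^ 2 / 6) := by
          gcongr
          rw [← hasSum_zeta_two.tsum_eq]
          exact tsum_comp_le_tsum_of_inj hasSum_zeta_two.summable (fun _ => by positivity) he
  obtain ⟨hlo, hhi⟩ := tprod_one_add_mem_Icc ha hxa hs
  exact ⟨(exp_le_exp.2 (by rw [neg_div]; linarith)).trans hlo, hhi.trans (exp_le_exp.2 htsum)⟩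

end Products

section Mertens

lemma sum_log_primeFactors_le_log (k : ℕ) : ∑ p ∈ k.primeFactors, log p ≤ log k := by
  rcases k.eq_zero_or_pos with rfl | hk
  · simp
  have hprime : ∀ p ∈ k.primeFactors, (p : ℝ) ≠ 0 := fun p hp =>
    Nat.cast_ne_zero.2 (Nat.prime_of_mem_primeFactors hp).ne_zero
  rw [← log_prod hprime, ← Nat.cast_prod]
  exact log_le_log (by exact_mod_cast prod_pos fun p hp => (Nat.prime_of_mem_primeFactors hp).pos)
    (by exact_mod_cast Nat.le_of_dvd hk (Nat.prod_primeFactors_dvd k))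

lemma sum_primesLE_div_mul_log_le (N : ℕ) :
    ∑ p ∈ Nat.primesLE N, ((N / p : ℕ) : ℝ) * log p ≤ N * log N := by
  -- both sides of `hcount` sum `log p` over the pairs `p ∣ k ≤ N`
  have hcount : ∑ p ∈ Nat.primesLE N, ((N / p : ℕ) : ℝ) * log p
      = ∑ k ∈ Ioc 0 N, ∑ p ∈ k.primeFactors, log p := by
    rw [sum_comm' (t' := Nat.primesLE N) (s' := fun p => {k ∈ Ioc 0 N | p ∣ k})]
    · refine sum_congr rfl fun p _ => ?_
      rw [sum_const, Nat.Ioc_filter_dvd_card_eq_div, nsmul_eq_mul]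
    · intro k p
      simp only [mem_Ioc, Nat.mem_primeFactors, mem_filter, Nat.primesLE, Nat.mem_primesBelow]
      constructor
      · rintro ⟨hk, hp, hpk, -⟩
        exact ⟨⟨hk, hpk⟩, by linarith [Nat.le_of_dvd hk.1 hpk], hp⟩
      · rintro ⟨⟨hk, hpk⟩, -, hp⟩
        exact ⟨hk, hp, hpk, by omega⟩
  rw [hcount]
  calc ∑ k ∈ Ioc 0 N, ∑ p ∈ k.primeFactors, log p ≤ ∑ k ∈ Ioc 0 N, log N := by
        refine sum_le_sum fun k hk => (sum_log_primeFactors_le_log k).trans ?_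
        obtain ⟨hk0, hkN⟩ := mem_Ioc.1 hk
        exact log_le_log (by exact_mod_cast hk0) (by exact_mod_cast hkN)
    _ = N * log N := by simp

theorem sum_primesLE_log_div_le (N : ℕ) :
    ∑ p ∈ Nat.primesLE N, log p / p ≤ log N + log 4 := by
  rcases N.eq_zero_or_pos with rfl | hN
  · simpa [Nat.primesLE_zero] using log_nonneg (by norm_num : (1 : ℝ) ≤ 4)
  have hN' : (0 : ℝ) < N := by exact_mod_cast hN
  refine le_of_mul_le_mul_left ?_ hN'
  calc (N : ℝ) * ∑ p ∈ Nat.primesLE N, log p / p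
      = ∑ p ∈ Nat.primesLE N, ((N : ℝ) / p) * log p := by
        rw [mul_sum]; exact sum_congr rfl fun p _ => by ring
    _ ≤ ∑ p ∈ Nat.primesLE N, (((N / p : ℕ) : ℝ) + 1) * log p := by
        refine sum_le_sum fun p hp => mul_le_mul_of_nonneg_right ?_
          (log_nonneg (by exact_mod_cast (Nat.prime_of_mem_primesLE hp).one_le))
        rw [← Nat.floor_div_eq_div (K := ℝ)]
        exact (Nat.lt_floor_add_one _).le
    _ = ∑ p ∈ Nat.primesLE N, ((N / p : ℕ) : ℝ) * log p + Chebyshev.theta N := by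
        rw [Chebyshev.theta_eq_sum_primesLE_log, ← sum_add_distrib]
        exact sum_congr rfl fun p _ => by ring
    _ ≤ N * log N + log 4 * N :=
        add_le_add (sum_primesLE_div_mul_log_le N) (Chebyshev.theta_le_log4_mul_x hN'.le)
    _ = N * (log N + log 4) := by ring

theorem sum_primesLE_inv_eq_abel (N : ℕ) (hN : 2 ≤ N) :
    ∑ p ∈ Nat.primesLE N, (1 : ℝ) / p
      = (log N)⁻¹ * ∑ p ∈ Nat.primesLE N, log p / p
        + ∑ i ∈ Ico 2 N, ((log i)⁻¹ - (log (i + 1))⁻¹) * ∑ p ∈ Nat.primesLE i, log p / p := by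
  set g : ℕ → ℝ := fun k => if k.Prime then log k / k else 0 with hg
  have hG : ∀ k, ∑ i ∈ range (k + 1), g i = ∑ p ∈ Nat.primesLE k, log p / p := fun k => by
    rw [hg, ← sum_filter]; rfl
  have hG2 : ∑ i ∈ range 2, g i = 0 := by
    simp [hg, sum_range_succ, Nat.not_prime_zero, Nat.not_prime_one]
  have hlhs : ∑ p ∈ Nat.primesLE N, (1 : ℝ) / p = ∑ i ∈ Ico 2 (N + 1), (log i)⁻¹ • g i := by
    rw [Nat.primesLE_eq_filter_Icc_two, sum_filter, Finset.Ico_add_one_right_eq_Icc]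
    refine sum_congr rfl fun i hi => ?_
    have : log i ≠ 0 := (log_pos (by exact_mod_cast (mem_Icc.1 hi).1)).ne'
    split_ifs with hp
    · simp only [hg, smul_eq_mul, if_pos hp]; field_simp
    · simp [hg, hp]
  rw [hlhs, sum_Ico_by_parts _ g (by omega), Nat.add_sub_cancel, hG2, smul_zero, sub_zero,
    sub_eq_add_neg, ← sum_neg_distrib, hG]
  congr 1
  refine sum_congr rfl fun i _ => ?_
  rw [hG, smul_eq_mul]; push_cast; ring

lemma inv_sub_inv_mul_le_log_sub_log {x y : ℝ} (hx : 0 < x) (hy : 0 < y) :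
    (x⁻¹ - y⁻¹) * x ≤ log y - log x := by
  rw [← log_div hy.ne' hx.ne']
  convert one_sub_inv_le_log_of_pos (div_pos hy hx) using 1
  field_simp

lemma neg_one_le_log_log_two : -1 ≤ log (log 2) := by
  rw [le_log_iff_exp_le (log_pos one_lt_two)]
  linarith [exp_neg_one_lt_d9, log_two_gt_d9]

theorem sum_primesLE_inv_le (N : ℕ) (hN : 2 ≤ N) :
    ∑ p ∈ Nat.primesLE N, (1 : ℝ) / p ≤ log (log N) + 4 := by
  have hlog : ∀ k : ℕ, 2 ≤ k → 0 < log k := fun k hk => log_pos (by exact_mod_cast hk)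
  -- `h` telescopes and, by `inv_sub_inv_mul_le_log_sub_log`, dominates each term of the Abel sum
  set h : ℕ → ℝ := fun k => log (log k) - log 4 * (log k)⁻¹ with hh
  have hterm : ∀ i ∈ Ico 2 N, ((log i)⁻¹ - (log (i + 1))⁻¹) * ∑ p ∈ Nat.primesLE i, log p / p
      ≤ h (i + 1) - h i := by
    intro i hi
    have hi2 : 2 ≤ i := (mem_Ico.1 hi).1
    have hi1 : 0 < log ((i : ℝ) + 1) := by exact_mod_cast hlog (i + 1) (by omega)
    have hmono : (log ((i : ℝ) + 1))⁻¹ ≤ (log i)⁻¹ :=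
      inv_anti₀ (hlog i hi2) (log_le_log (by positivity) (by linarith))
    calc ((log i)⁻¹ - (log (i + 1))⁻¹) * ∑ p ∈ Nat.primesLE i, log p / p
        ≤ ((log i)⁻¹ - (log (i + 1))⁻¹) * (log i + log 4) := by
          gcongr
          exact sum_primesLE_log_div_le i
      _ ≤ h (i + 1) - h i := by
          have := inv_sub_inv_mul_le_log_sub_log (hlog i hi2) hi1
          simp only [hh]; push_cast; nlinarith
  have hlogN := hlog N hN
  rw [sum_primesLE_inv_eq_abel N hN]
  calc _ ≤ (log N)⁻¹ * (log N + log 4) + (h N - h 2) := by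
        gcongr
        · exact sum_primesLE_log_div_le N
        · exact (sum_le_sum hterm).trans (sum_Ico_sub h hN).le
    _ ≤ log (log N) + 4 := by
        have h4 : log 4 = 2 * log 2 := by
          rw [show (4 : ℝ) = 2 ^ 2 by norm_num, log_pow]; norm_num
        have h1 : (log N)⁻¹ * (log N + log 4) = 1 + log 4 * (log N)⁻¹ := by field_simp
        have h2 : log 4 * (log 2)⁻¹ = 2 := by rw [h4]; field_simp
        simp only [hh, Nat.cast_ofNat]
        linarith [neg_one_le_log_log_two]

lemma sum_primeFactors_inv_of_lt_le {m : ℕ} {Y : ℝ} (hY : 1 < Y) (hm : log m ≤ Y) :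
    ∑ p ∈ m.primeFactors with Y < ((p : ℕ) : ℝ), (1 : ℝ) / p ≤ (log Y)⁻¹ := by
  have hlogY : 0 < log Y := log_pos hY
  calc ∑ p ∈ m.primeFactors with Y < ((p : ℕ) : ℝ), (1 : ℝ) / p
      ≤ ∑ p ∈ m.primeFactors with Y < ((p : ℕ) : ℝ), log p / (Y * log Y) := by
        refine sum_le_sum fun p hp => ?_
        obtain ⟨-, hYp⟩ := mem_filter.1 hp
        rw [div_le_div_iff₀ (by linarith) (by positivity), one_mul, mul_comm (log _)]
        exact mul_le_mul hYp.le (log_le_log (by linarith) hYp.le) hlogY.le (by linarith)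
    _ ≤ (∑ p ∈ m.primeFactors, log p) / (Y * log Y) := by
        rw [← sum_div]
        gcongr
        exact filter_subset _ _
    _ ≤ Y / (Y * log Y) := by gcongr; exact (sum_log_primeFactors_le_log m).trans hm
    _ = (log Y)⁻¹ := by field_simp

theorem sum_primeFactors_inv_le {m : ℕ} {Y : ℝ} (hY : 2 ≤ Y) (hm : log m ≤ Y) :
    ∑ p ∈ m.primeFactors, (1 : ℝ) / p ≤ log (log Y) + 6 := by
  rw [← sum_filter_add_sum_filter_not m.primeFactors (fun p => (p : ℝ) ≤ Y)]
  have hN : 2 ≤ ⌊Y⌋₊ := Nat.le_floor (by exact_mod_cast hY)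
  have hNY : (⌊Y⌋₊ : ℝ) ≤ Y := Nat.floor_le (by linarith)
  have hsmall : ∑ p ∈ m.primeFactors with ((p : ℕ) : ℝ) ≤ Y, (1 : ℝ) / p ≤ log (log Y) + 4 := by
    calc ∑ p ∈ m.primeFactors with ((p : ℕ) : ℝ) ≤ Y, (1 : ℝ) / p
        ≤ ∑ p ∈ Nat.primesLE ⌊Y⌋₊, (1 : ℝ) / p := by
          refine sum_le_sum_of_subset_of_nonneg (fun p hp => ?_) fun _ _ _ => by positivity
          obtain ⟨hp, hpY⟩ := mem_filter.1 hp
          exact Nat.mem_primesLE.2 ⟨Nat.le_floor hpY, Nat.prime_of_mem_primeFactors hp⟩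
      _ ≤ log (log ⌊Y⌋₊) + 4 := sum_primesLE_inv_le _ hN
      _ ≤ log (log Y) + 4 := by
          have : (2 : ℝ) ≤ ⌊Y⌋₊ := by exact_mod_cast hN
          gcongr
          exact log_pos (by linarith)
  have hlarge : ∑ p ∈ m.primeFactors with ¬((p : ℕ) : ℝ) ≤ Y, (1 : ℝ) / p ≤ 2 := by
    simp_rw [not_le]
    refine (sum_primeFactors_inv_of_lt_le (by linarith) hm).trans ?_
    rw [inv_le_comm₀ (log_pos (by linarith)) two_pos]
    calc 2⁻¹ ≤ log 2 := by linarith [log_two_gt_d9]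
      _ ≤ log Y := log_le_log two_pos hY
  linarith

lemma exp_two_lt_ten : exp 2 < 10 := by
  have := exp_one_lt_d9
  rw [show (2 : ℝ) = 1 + 1 by norm_num, exp_add]
  nlinarith [exp_pos 1]

theorem exp_sum_primeFactors_inv_le {m : ℕ} {x : ℝ} (hx : exp 2 ≤ x) (hm : (m : ℝ) ≤ x) :
    exp (∑ p ∈ m.primeFactors, (1 : ℝ) / p) ≤ exp 6 * log (log x) := by
  have hx0 : 0 < x := (exp_pos 2).trans_le hx
  have hY : 2 ≤ log x := (le_log_iff_exp_le hx0).2 hx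
  have hlog : log m ≤ log x := by
    rcases m.eq_zero_or_pos with rfl | hm0
    · simpa using log_nonneg (by linarith [add_one_le_exp 2] : (1 : ℝ) ≤ x)
    · exact log_le_log (by exact_mod_cast hm0) hm
  calc _ ≤ exp (log (log (log x)) + 6) := exp_le_exp.2 (sum_primeFactors_inv_le hY hlog)
    _ = exp 6 * log (log x) := by rw [exp_add, exp_log (log_pos (by linarith)), mul_comm]

end Mertens

section EulerFactors

lemma abs_chi_le_one (d : ℕ) : |chi d| ≤ 1 := by
  unfold chi; split_ifs <;> norm_num

lemma abs_chi_div_le_half {p : ℕ} (hp : p.Prime) : |chi p / p| ≤ 1 / 2 := by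
  rw [abs_div, Nat.abs_cast, div_le_div_iff₀ (by exact_mod_cast hp.pos) two_pos, one_mul]
  have : (2 : ℝ) ≤ p := by exact_mod_cast hp.two_le
  linarith [abs_chi_le_one p]

lemma abs_chi_div_le (p : ℕ) : |chi p / p| ≤ 1 / p := by
  rw [abs_div, Nat.abs_cast]
  exact div_le_div_of_nonneg_right (abs_chi_le_one p) (Nat.cast_nonneg p)

lemma exp_neg_two_mul_le_prod_one_sub_chi_div (m : ℕ) :
    exp (-(2 * ∑ p ∈ m.primeFactors, (1 : ℝ) / p)) ≤ ∏ p ∈ m.primeFactors, (1 - chi p / p) := by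
  have h := exp_neg_sum_abs_div_le_prod_one_add (s := m.primeFactors)
    (x := fun p : ℕ => -(chi p / p)) (a := 1 / 2) (by norm_num) fun p hp => by
      simpa only [abs_neg] using abs_chi_div_le_half (Nat.prime_of_mem_primeFactors hp)
  simp only [← sub_eq_add_neg, abs_neg] at h
  refine le_trans (exp_le_exp.2 ?_) h
  have := sum_le_sum fun p (_ : p ∈ m.primeFactors) => abs_chi_div_le p
  rw [show (1 : ℝ) - 1 / 2 = 2⁻¹ by norm_num, div_inv_eq_mul]
  linarith

lemma prod_one_sub_chi_div_le_exp (m : ℕ) :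
    ∏ p ∈ m.primeFactors, (1 - chi p / p) ≤ exp (∑ p ∈ m.primeFactors, (1 : ℝ) / p) := by
  simp only [sub_eq_add_neg]
  refine (prod_one_add_le_exp_sum_of_neg_one_le fun p hp => ?_).trans
    (exp_le_exp.2 (sum_le_sum fun p _ => (neg_le_abs _).trans (abs_chi_div_le p)))
  linarith [le_abs_self (chi p / p), abs_chi_div_le_half (Nat.prime_of_mem_primeFactors hp)]

lemma add_div_mul_sub_two_nonneg {p c : ℝ} (hp : 3 ≤ p) (hc : |c| ≤ 1) :
    0 ≤ (p + c) / (p * (p - 2)) :=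
  div_nonneg (by linarith [(abs_le.1 hc).1]) (by nlinarith)

lemma add_div_mul_sub_two_le {p c : ℝ} (hp : 3 ≤ p) (hc : |c| ≤ 1) :
    (p + c) / (p * (p - 2)) ≤ 1 / p + 9 / p ^ 2 := by
  have h9 : 3 ≤ 9 * (p - 2) / p := by rw [le_div_iff₀ (by linarith)]; linarith
  rw [div_le_iff₀ (by nlinarith), show (1 / p + 9 / p ^ 2) * (p * (p - 2))
    = p - 2 + 9 * (p - 2) / p by field_simp]
  linarith [(abs_le.1 hc).2]

lemma abs_two_mul_div_mul_sub_two_le {p c : ℝ} (hp : 3 ≤ p) (hc : |c| ≤ 1) :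
    |2 * c / (p * (p - 2))| ≤ 6 / p ^ 2 := by
  rw [abs_div, abs_mul, abs_two, abs_of_pos (by nlinarith : 0 < p * (p - 2)),
    div_le_div_iff₀ (by nlinarith) (by positivity)]
  nlinarith [abs_nonneg c]

lemma sum_one_div_sq_le (s : Finset ℕ) : ∑ k ∈ s, (1 : ℝ) / k ^ 2 ≤ π ^ 2 / 6 :=
  sum_le_hasSum s (fun _ _ => by positivity) hasSum_zeta_two

lemma one_le_prod_one_add_add_chi_div (n : ℕ) :
    1 ≤ ∏ p ∈ n.primeFactors.filter (fun p => 2 < p),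
      (1 + ((p : ℝ) + chi p) / (p * ((p : ℝ) - 2))) := by
  refine one_le_prod fun p hp => ?_
  have hp3 : (3 : ℝ) ≤ p := by exact_mod_cast (mem_filter.1 hp).2
  linarith [add_div_mul_sub_two_nonneg hp3 (abs_chi_le_one p)]

lemma prod_one_add_add_chi_div_le_exp (n : ℕ) :
    ∏ p ∈ n.primeFactors.filter (fun p => 2 < p),
        (1 + ((p : ℝ) + chi p) / (p * ((p : ℝ) - 2)))
      ≤ exp (3 * π ^ 2 / 2) * exp (∑ p ∈ n.primeFactors, (1 : ℝ) / p) := by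
  set s := n.primeFactors.filter (fun p => 2 < p)
  have hp3 : ∀ p ∈ s, (3 : ℝ) ≤ p := fun p hp => by exact_mod_cast (mem_filter.1 hp).2
  refine (prod_one_add_le_exp_sum_of_neg_one_le fun p hp => ?_).trans ?_
  · linarith [add_div_mul_sub_two_nonneg (hp3 p hp) (abs_chi_le_one p)]
  rw [← exp_add, exp_le_exp]
  calc ∑ p ∈ s, ((p : ℝ) + chi p) / (p * ((p : ℝ) - 2))
      ≤ ∑ p ∈ s, ((1 : ℝ) / p + 9 * (1 / (p : ℝ) ^ 2)) := sum_le_sum fun p hp => by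
        rw [mul_one_div]; exact add_div_mul_sub_two_le (hp3 p hp) (abs_chi_le_one p)
    _ = ∑ p ∈ s, (1 : ℝ) / p + 9 * ∑ p ∈ s, 1 / (p : ℝ) ^ 2 := by
        rw [sum_add_distrib, mul_sum]
    _ ≤ ∑ p ∈ n.primeFactors, (1 : ℝ) / p + 9 * (π ^ 2 / 6) := by
        gcongr
        · exact filter_subset _ _
        · exact sum_one_div_sq_le s
    _ = 3 * π ^ 2 / 2 + ∑ p ∈ n.primeFactors, (1 : ℝ) / p := by ring

lemma tprod_one_add_two_mul_chi_div_mem_Icc (n : ℕ) :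
    ∏' p : {p : Nat.Primes // ¬ (p : ℕ) ∣ n * (n - 1)},
        (1 + 2 * chi (p : ℕ) / ((p : ℕ) * (((p : ℕ) : ℝ) - 2)))
      ∈ Set.Icc (exp (-(3 * π ^ 2))) (exp (3 * π ^ 2)) := by
  have hp3 : ∀ p : {p : Nat.Primes // ¬ (p : ℕ) ∣ n * (n - 1)}, (3 : ℝ) ≤ (p : ℕ) := by
    rintro ⟨p, hp⟩
    have h2 : (p : ℕ) ≠ 2 := fun h => hp (h ▸ (Nat.even_mul_pred_self n).two_dvd)
    have := p.2.two_le
    exact_mod_cast (show 3 ≤ (p : ℕ) by omega)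
  have hterm := fun p => abs_two_mul_div_mul_sub_two_le (hp3 p) (abs_chi_le_one (p : ℕ))
  refine tprod_one_add_mem_Icc_of_abs_le_div_sq
    (Nat.Primes.coe_nat_injective.comp Subtype.val_injective) (a := 2 / 3) (C := 6)
    (by norm_num) (fun p => (hterm p).trans ?_) (by norm_num) hterm (le_of_eq (by ring))
  have := hp3 p
  rw [div_le_div_iff₀ (by positivity) (by norm_num)]
  nlinarith

lemma c₀_pos : 0 < c₀ := by
  have hp : ∀ p : {p : Nat.Primes // 2 < (p : ℕ)}, (3 : ℝ) ≤ (p : ℕ) := fun p => by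
    exact_mod_cast p.2
  have hterm : ∀ p : {p : Nat.Primes // 2 < (p : ℕ)},
      |-(1 / (((p : ℕ) : ℝ) - 1) ^ 2)| ≤ 4 / ((p : ℕ) : ℝ) ^ 2 := fun p => by
    have := hp p
    rw [abs_neg, abs_of_nonneg (by positivity), div_le_div_iff₀ (by nlinarith) (by positivity)]
    nlinarith
  have hsmall : ∀ p : {p : Nat.Primes // 2 < (p : ℕ)}, 4 / ((p : ℕ) : ℝ) ^ 2 ≤ 1 / 2 :=
    fun p => by have := hp p; rw [div_le_iff₀ (by positivity)]; nlinarith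
  obtain ⟨hlo, -⟩ := tprod_one_add_mem_Icc_of_abs_le_div_sq
    (Nat.Primes.coe_nat_injective.comp Subtype.val_injective) (by norm_num)
    (fun p => (hterm p).trans (hsmall p)) (by norm_num) hterm le_rfl
  simp only [← sub_eq_add_neg] at hlo
  unfold c₀
  have := (exp_pos _).trans_le hlo
  positivity

end EulerFactors

lemma le_MR_of_exp_sum_le {n : ℕ} {B : ℝ}
    (hB : exp (∑ p ∈ (n - 1).primeFactors, (1 : ℝ) / p) ≤ B) :
    π * c₀ * exp (-(3 * π ^ 2)) * n / B ^ 2 ≤ MR n := by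
  have := c₀_pos
  have hB₀ : 0 < B := (exp_pos _).trans_le hB
  have hP₁ : (B ^ 2)⁻¹ ≤ ∏ p ∈ (n - 1).primeFactors, (1 - chi p / p) := calc
    (B ^ 2)⁻¹ ≤ (exp (∑ p ∈ (n - 1).primeFactors, (1 : ℝ) / p) ^ 2)⁻¹ := by gcongr
    _ = exp (-(2 * ∑ p ∈ (n - 1).primeFactors, (1 : ℝ) / p)) := by
      rw [exp_neg, ← exp_nat_mul, Nat.cast_ofNat]
    _ ≤ _ := exp_neg_two_mul_le_prod_one_sub_chi_div (n - 1)
  have hP₁₀ := (inv_pos.2 (pow_pos hB₀ 2)).trans_le hP₁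
  have hP₂ := one_le_prod_one_add_add_chi_div n
  have hP₃ := (tprod_one_add_two_mul_chi_div_mem_Icc n).1
  calc π * c₀ * exp (-(3 * π ^ 2)) * n / B ^ 2
      = π * c₀ * n * (B ^ 2)⁻¹ * 1 * exp (-(3 * π ^ 2)) := by ring
    _ ≤ MR n := by unfold MR; gcongr

lemma MR_le_of_exp_sum_le {n : ℕ} {B : ℝ}
    (hB₁ : exp (∑ p ∈ (n - 1).primeFactors, (1 : ℝ) / p) ≤ B)
    (hB₀ : exp (∑ p ∈ n.primeFactors, (1 : ℝ) / p) ≤ B) :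
    MR n ≤ π * c₀ * exp (3 * π ^ 2 / 2) * exp (3 * π ^ 2) * n * B ^ 2 := by
  have := c₀_pos
  have hB := (exp_pos _).trans_le hB₀
  have hP₁ := (prod_one_sub_chi_div_le_exp (n - 1)).trans hB₁
  have hP₁₀ := (exp_pos _).trans_le (exp_neg_two_mul_le_prod_one_sub_chi_div (n - 1))
  have hP₂ := (prod_one_add_add_chi_div_le_exp n).trans (by gcongr : _ ≤ exp (3 * π ^ 2 / 2) * B)
  have hP₂₀ := one_pos.trans_le (one_le_prod_one_add_add_chi_div n)
  obtain ⟨hP₃₀, hP₃⟩ := tprod_one_add_two_mul_chi_div_mem_Icc n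
  have hP₃₀ := (exp_pos _).trans_le hP₃₀
  calc MR n ≤ π * c₀ * n * B * (exp (3 * π ^ 2 / 2) * B) * exp (3 * π ^ 2) := by
        unfold MR; gcongr
    _ = _ := by ring

/-- `n / (log log 10n)² ≪ M_R(n) ≪ n (log log 10n)²` for even `n ≥ 4`. -/
theorem MR_size :
    ∃ c₁ > 0, ∃ c₂ > 0, ∀ n : ℕ, 4 ≤ n → 2 ∣ n →
      c₁ * n / (Real.log (Real.log (10 * n))) ^ 2 ≤ MR n ∧
      MR n ≤ c₂ * n * (Real.log (Real.log (10 * n))) ^ 2 := by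
  have := c₀_pos
  refine ⟨π * c₀ * exp (-(3 * π ^ 2)) / exp 6 ^ 2, by positivity,
    π * c₀ * exp (3 * π ^ 2 / 2) * exp (3 * π ^ 2) * exp 6 ^ 2, by positivity,
    fun n hn _ => ?_⟩
  have hS : ∀ m ≤ n, exp (∑ p ∈ m.primeFactors, (1 : ℝ) / p) ≤ exp 6 * log (log (10 * n)) :=
    fun m hm => by
      have : (4 : ℝ) ≤ n := by exact_mod_cast hn
      have : (m : ℝ) ≤ n := by exact_mod_cast hm
      exact exp_sum_primeFactors_inv_le (by linarith [exp_two_lt_ten]) (by linarith)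
  constructor
  · calc _ = π * c₀ * exp (-(3 * π ^ 2)) * n / (exp 6 * log (log (10 * n))) ^ 2 := by ring
      _ ≤ MR n := le_MR_of_exp_sum_le (hS _ (Nat.sub_le n 1))
  · calc MR n ≤ _ := MR_le_of_exp_sum_le (hS _ (Nat.sub_le n 1)) (hS n le_rfl)
      _ = _ := by ring
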